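/- arXiv:1107.0954 — 3 statements merged into one kernel-verified Lean document; each statement's English description precedes it below -/
import Mathlib

section
/- In the category of groups, the kernel of the canonical map from the free product X ∗ Y to the direct product X × Y (sending each factor identically) is generated by the commutators [ι_X(x), ι_Y(y)] for x ∈ X, y ∈ Y. -/
open Monoid
open scoped Monoid.Coprod
open scoped commutatorElement

/-!
The commutator subgroup `⁅range inl, range inr⁆` is normalized by both factors, which generate
`X ∗ Y`, so it is normal. Modulo it the images of `X` and `Y` commute, so the quotient map
factors through `X × Y`; hence it contains the kernel of `X ∗ Y → X × Y`. The converse inclusion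
holds because `(x, 1)` and `(1, y)` commute.
-/

theorem Subgroup.commutator_normal_of_sup_eq_top {G : Type*} [Group G] {H K : Subgroup G}
    (h : H ⊔ K = ⊤) : ⁅H, K⁆.Normal :=
  normalizer_eq_top_iff.mp <| top_le_iff.mp <|
    h ▸ sup_le (normalizer_commutator_ge_left H K) (normalizer_commutator_ge_right H K)

namespace Monoid.Coprod

variable {M N P : Type*}

theorem noncommCoprod_comp_toProd [Monoid M] [Monoid N] [Monoid P] (f : M ∗ N →* P)
    (hf : ∀ m n, Commute (f (inl m)) (f (inr n))) :
    (MonoidHom.noncommCoprod (f.comp inl) (f.comp inr) hf).comp toProd = f := by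
  ext <;> simp

theorem ker_toProd_le_ker [Group M] [Group N] [Monoid P] (f : M ∗ N →* P)
    (hf : ∀ m n, Commute (f (inl m)) (f (inr n))) :
    MonoidHom.ker (toProd : M ∗ N →* M × N) ≤ MonoidHom.ker f := by
  rw [← noncommCoprod_comp_toProd f hf, ← MonoidHom.comap_ker]
  exact MonoidHom.ker_le_comap _ _

theorem ker_toProd [Group M] [Group N] :
    MonoidHom.ker (toProd : M ∗ N →* M × N) =
      ⁅(inl : M →* M ∗ N).range, (inr : N →* M ∗ N).range⁆ := by
  set C := ⁅(inl : M →* M ∗ N).range, (inr : N →* M ∗ N).range⁆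
  have : C.Normal := Subgroup.commutator_normal_of_sup_eq_top range_inl_sup_range_inr
  apply le_antisymm
  · refine (ker_toProd_le_ker (QuotientGroup.mk' C) fun m n ↦ ?_).trans
      (QuotientGroup.ker_mk' C).le
    rw [← commutatorElement_eq_one_iff_commute, ← map_commutatorElement, QuotientGroup.mk'_apply,
      QuotientGroup.eq_one_iff]
    exact Subgroup.commutator_mem_commutator ⟨m, rfl⟩ ⟨n, rfl⟩
  · rw [Subgroup.commutator_le]
    rintro _ ⟨m, rfl⟩ _ ⟨n, rfl⟩
    simp [commutatorElement_def]

end Monoid.Coprod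

/-- In the category of groups, the kernel of the canonical map from the free product
`X ∗ Y` to the direct product `X × Y` is generated by the commutators
`[ι_X(x), ι_Y(y)]` for `x ∈ X`, `y ∈ Y`. -/
theorem stmt_2 (X Y : Type*) [Group X] [Group Y] :
    MonoidHom.ker (Coprod.toProd : X ∗ Y →* X × Y) =
      Subgroup.closure
        {g : X ∗ Y | ∃ (x : X) (y : Y), g = ⁅(Coprod.inl x : X ∗ Y), Coprod.inr y⁆} := by
  rw [Coprod.ker_toProd, Subgroup.commutator_def]
  congr 1
  ext g
  simp [eq_comm]
end

section
/- Let (R, G, d, c, e) be a reflexive graph in groups (d, c : R → G with common section e : G → R, d∘e = c∘e = id). If Ker(d) and Ker(c) commute elementwise in R and the ternary commutator condition holds in the sense that [[Ker(d), Ker(c)], R] = 1, then the partial composition m(β, α) = β·e(d(β))⁻¹·α (for c(β) = d(α)) defines an internal category (indeed groupoid) structure on the graph. -/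
/-! Composition `β * (e (d α))⁻¹ * α` is a homomorphism on composable pairs because
expanding `(β * β') ∘ (α * α')` differs from `(β ∘ α) * (β' ∘ α')` only by swapping an
element of `Ker d` with one of `Ker c`. Identities, associativity and inverses hold by
direct computation; the inverse arrow of `β` is `e (c β) * β⁻¹ * e (d β)`. -/

/-- `m` is an internal category (groupoid) structure on the reflexive graph
`(R, G, d, c, e)` in groups: on composable pairs (`c β = d α`) the composition `m` is a
group homomorphism, respects domains and codomains, has the `e g` as identities, and is
associative. -/
def IsInternalCategoryStruct {R G : Type*} [Group R] [Group G]
    (d c : R →* G) (e : G →* R) (m : R → R → R) : Prop :=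
  (∀ β α β' α' : R, c β = d α → c β' = d α' →
      m (β * β') (α * α') = m β α * m β' α') ∧
  (∀ β α : R, c β = d α → d (m β α) = d β ∧ c (m β α) = c α) ∧
  (∀ α : R, m (e (d α)) α = α) ∧
  (∀ β : R, m β (e (c β)) = β) ∧
  (∀ β α γ : R, c β = d α → c α = d γ → m (m β α) γ = m β (m α γ))

section ReflexiveGraph

variable {R G : Type*} [Group R] [Group G] (d c : R →* G) (e : G →* R)

def graphComp (β α : R) : R := β * (e (d α))⁻¹ * α

variable {d c e}

theorem apply_apply_of_comp_eq_id {f : R →* G} (h : f.comp e = MonoidHom.id G) (g : G) :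
    f (e g) = g :=
  DFunLike.congr_fun h g

theorem inv_apply_mul_mem_ker (hd : d.comp e = MonoidHom.id G) (α : R) :
    (e (d α))⁻¹ * α ∈ d.ker := by
  simp [MonoidHom.mem_ker, apply_apply_of_comp_eq_id hd]

theorem mul_inv_apply_mem_ker (hc : c.comp e = MonoidHom.id G) (β : R) :
    β * (e (c β))⁻¹ ∈ c.ker := by
  simp [MonoidHom.mem_ker, apply_apply_of_comp_eq_id hc]

theorem graphComp_mul (hd : d.comp e = MonoidHom.id G) (hc : c.comp e = MonoidHom.id G)
    (hcomm : ∀ a ∈ d.ker, ∀ b ∈ c.ker, a * b = b * a) (β α β' α' : R) (h' : c β' = d α') :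
    graphComp d e (β * β') (α * α') = graphComp d e β α * graphComp d e β' α' := by
  have hx := inv_apply_mul_mem_ker hd α
  have hy := mul_inv_apply_mem_ker hc β'
  rw [h'] at hy
  calc graphComp d e (β * β') (α * α')
      = β * ((β' * (e (d α'))⁻¹) * ((e (d α))⁻¹ * α)) * α' := by
        simp only [graphComp, map_mul, mul_inv_rev]; group
    _ = β * (((e (d α))⁻¹ * α) * (β' * (e (d α'))⁻¹)) * α' := by rw [hcomm _ hx _ hy]
    _ = graphComp d e β α * graphComp d e β' α' := by simp only [graphComp]; group

theorem d_graphComp (hd : d.comp e = MonoidHom.id G) (β α : R) :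
    d (graphComp d e β α) = d β := by
  simp [graphComp, apply_apply_of_comp_eq_id hd]

theorem c_graphComp (hc : c.comp e = MonoidHom.id G) {β α : R} (h : c β = d α) :
    c (graphComp d e β α) = c α := by
  simp [graphComp, apply_apply_of_comp_eq_id hc, ← h]

theorem graphComp_apply_d_left (α : R) : graphComp d e (e (d α)) α = α := by
  simp [graphComp]

theorem graphComp_apply_c_right (hd : d.comp e = MonoidHom.id G) (β : R) :
    graphComp d e β (e (c β)) = β := by
  simp [graphComp, apply_apply_of_comp_eq_id hd]

theorem graphComp_assoc (hd : d.comp e = MonoidHom.id G) (β α γ : R) :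
    graphComp d e (graphComp d e β α) γ = graphComp d e β (graphComp d e α γ) := by
  simp only [graphComp, ← d_graphComp hd α γ]
  group

theorem isInternalCategoryStruct_graphComp (hd : d.comp e = MonoidHom.id G)
    (hc : c.comp e = MonoidHom.id G) (hcomm : ∀ a ∈ d.ker, ∀ b ∈ c.ker, a * b = b * a) :
    IsInternalCategoryStruct d c e (graphComp d e) :=
  ⟨fun β α β' α' _ h' => graphComp_mul hd hc hcomm β α β' α' h',
    fun β α h => ⟨d_graphComp hd β α, c_graphComp hc h⟩,
    graphComp_apply_d_left,
    graphComp_apply_c_right hd,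
    fun β α γ _ _ => graphComp_assoc hd β α γ⟩

theorem exists_graphComp_inverse (hd : d.comp e = MonoidHom.id G)
    (hc : c.comp e = MonoidHom.id G) (β : R) :
    ∃ β' : R, d β' = c β ∧ c β' = d β ∧
      graphComp d e β β' = e (d β) ∧ graphComp d e β' β = e (c β) := by
  have hde := apply_apply_of_comp_eq_id hd
  have hce := apply_apply_of_comp_eq_id hc
  refine ⟨e (c β) * β⁻¹ * e (d β), ?_, ?_, ?_, ?_⟩
  · simp [hde]
  · simp [hce]
  · simp only [graphComp, map_mul, hde, map_inv, inv_mul_cancel_right]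
    group
  · simp [graphComp]

end ReflexiveGraph

theorem stmt_15_general {R G : Type*} [Group R] [Group G] (d c : R →* G) (e : G →* R)
    (hd : d.comp e = MonoidHom.id G) (hc : c.comp e = MonoidHom.id G)
    (hcomm : ∀ a ∈ d.ker, ∀ b ∈ c.ker, a * b = b * a) :
    IsInternalCategoryStruct d c e (fun β α => β * (e (d α))⁻¹ * α) ∧
    -- and every arrow has a two-sided inverse, so the structure is a groupoid
    (∀ β : R, ∃ β' : R, d β' = c β ∧ c β' = d β ∧
      β * (e (d β'))⁻¹ * β' = e (d β) ∧ β' * (e (d β))⁻¹ * β = e (c β)) :=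
  ⟨isInternalCategoryStruct_graphComp hd hc hcomm, exists_graphComp_inverse hd hc⟩

/-- Let `(R, G, d, c, e)` be a reflexive graph in groups (`d, c : R → G` with common
section `e`). If `Ker d` and `Ker c` commute elementwise in `R`, and the ternary
commutator condition `[[Ker d, Ker c], R] = 1` holds, then the partial composition
`m(β, α) = β·e(d α)⁻¹·α` (for `c β = d α`; note `d α = c β`) defines an internal category
— indeed groupoid — structure on the graph. -/
theorem stmt_15 {R G : Type*} [Group R] [Group G] (d c : R →* G) (e : G →* R)
    (hd : d.comp e = MonoidHom.id G) (hc : c.comp e = MonoidHom.id G)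
    (hcomm : ∀ a ∈ d.ker, ∀ b ∈ c.ker, a * b = b * a)
    (hternary : ⁅⁅d.ker, c.ker⁆, (⊤ : Subgroup R)⁆ = ⊥) :
    IsInternalCategoryStruct d c e (fun β α => β * (e (d α))⁻¹ * α) ∧
    -- and every arrow has a two-sided inverse, so the structure is a groupoid
    (∀ β : R, ∃ β' : R, d β' = c β ∧ c β' = d β ∧
      β * (e (d β'))⁻¹ * β' = e (d β) ∧ β' * (e (d β))⁻¹ * β = e (c β)) :=
  stmt_15_general d c e hd hc hcomm
end

section
/- In the category of groups, for a reflexive graph (R, G, d, c, e), the kernels Ker(d) and Ker(c) commute elementwise (i.e. [Ker(d), Ker(c)] = 1) if and only if the graph admits an internal groupoid structure. -/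
/-- In the category of groups, for a reflexive graph `(R, G, d, c, e)`, the kernels
`Ker d` and `Ker c` commute elementwise (`[Ker d, Ker c] = ⊥`) if and only if the graph
admits an internal groupoid structure (Loday: in groups, "Smith is Huq"). -/
theorem stmt_16 {R G : Type*} [Group R] [Group G] (d c : R →* G) (e : G →* R)
    (hd : d.comp e = MonoidHom.id G) (hc : c.comp e = MonoidHom.id G) :
    ⁅d.ker, c.ker⁆ = ⊥ ↔ ∃ m : R → R → R, IsInternalCategoryStruct d c e m := by
  have hde : ∀ g : G, d (e g) = g := fun g => MonoidHom.ext_iff.mp hd g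
  have hce : ∀ g : G, c (e g) = g := fun g => MonoidHom.ext_iff.mp hc g
  constructor
  · intro hcomm
    have hcenter : ∀ x y : R, x ∈ d.ker → y ∈ c.ker → x * y = y * x := by
      intro x y hx hy
      have h := Subgroup.commutator_le.mp (le_of_eq hcomm) x hx y hy
      rw [Subgroup.mem_bot] at h
      have := commutatorElement_eq_one_iff_mul_comm.mp h
      exact this
    refine ⟨fun β α => β * (e (c β))⁻¹ * α, ?_, ?_, ?_, ?_, ?_⟩
    · intro β α β' α' h h'
      dsimp only
      have h1 : (e (c β))⁻¹ * α ∈ d.ker := by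
        rw [MonoidHom.mem_ker, map_mul, map_inv, hde, h]
        group
      have h2 : β' * (e (c β'))⁻¹ ∈ c.ker := by
        rw [MonoidHom.mem_ker, map_mul, map_inv, hce]
        group
      have hc2 : ((e (c β))⁻¹ * α) * (β' * (e (c β'))⁻¹) =
          (β' * (e (c β'))⁻¹) * ((e (c β))⁻¹ * α) := hcenter _ _ h1 h2
      rw [map_mul, map_mul]
      calc β * β' * (e (c β) * e (c β'))⁻¹ * (α * α')
          = β * ((β' * (e (c β'))⁻¹) * ((e (c β))⁻¹ * α)) * α' := by group
        _ = β * (((e (c β))⁻¹ * α) * (β' * (e (c β'))⁻¹)) * α' := by rw [← hc2]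
        _ = β * (e (c β))⁻¹ * α * (β' * (e (c β'))⁻¹ * α') := by group
    · intro β α h
      dsimp only
      constructor
      · rw [map_mul, map_mul, map_inv, hde, h]; group
      · rw [map_mul, map_mul, map_inv, hce]; group
    · intro α
      dsimp only
      rw [hce]; group
    · intro β
      dsimp only
      group
    · intro β α γ _ _
      dsimp only
      have : c (β * (e (c β))⁻¹ * α) = c α := by
        rw [map_mul, map_mul, map_inv, hce]; group
      rw [this]; group
  · rintro ⟨m, hmul, _, hl, hr, _⟩
    have key : ∀ x y : R, x ∈ d.ker → y ∈ c.ker → x * y = y * x := by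
      intro x y hx hy
      rw [MonoidHom.mem_ker] at hx hy
      have e1 : m 1 x = x := by
        have := hl x; rwa [hx, map_one] at this
      have e2 : m y 1 = y := by
        have := hr y; rwa [hy, map_one] at this
      have c1 : c (1 : R) = d x := by rw [map_one, hx]
      have c2 : c y = d (1 : R) := by rw [map_one, hy]
      have A : m (1 * y) (x * 1) = m 1 x * m y 1 := hmul 1 x y 1 c1 c2
      have B : m (y * 1) (1 * x) = m y 1 * m 1 x := hmul y 1 1 x c2 c1
      rw [one_mul, mul_one, e1, e2] at A
      rw [one_mul, mul_one, e1, e2] at B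
      rw [← A, B]
    rw [eq_bot_iff]
    refine Subgroup.commutator_le.mpr ?_
    intro x hx y hy
    rw [Subgroup.mem_bot]
    exact commutatorElement_eq_one_iff_mul_comm.mpr (key x y hx hy)
end
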